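/- Let 0 < q < 1. On H = ℓ²(ℤ≥0)⊗ℓ²(ℤ≥0), the operators z₁₁ = e^{iφ} I⊗D² − q^{-1} S*C₄ ⊗ C₂SC₂S, z₂₁ = D²⊗C₂S, z₂₂ = C₄S⊗I (defining τ_φ) satisfy τ_φ(z₁₁)* Ω = e^{−iφ} Ω, τ_φ(z₂₁)* Ω = 0, and τ_φ(z₂₂)* Ω = 0, where Ω = e₀ ⊗ e₀. -/

import Mathlib

/-! The `(j, k)` coordinate of `T* Ω` is the conjugate of the `Ω`-coordinate of `T (e_j ⊗ e_k)`.
`z₂₁` and `z₂₂` raise one of the indices and the second term of `z₁₁` raises `k` by two, so the only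
nonzero such coordinate is that of `z₁₁ Ω = e^{iφ} Ω`. -/

noncomputable section
open ContinuousLinearMap Complex

/-- ℓ²(ℤ≥0) ⊗ ℓ²(ℤ≥0), realized as ℓ²(ℤ≥0 × ℤ≥0) -/
abbrev K : Type := lp (fun _ : ℕ × ℕ => ℂ) 2

/-- the orthonormal basis vector e_j ⊗ e_k -/
def E (j k : ℕ) : K := lp.single 2 (j, k) 1

open scoped InnerProductSpace in
theorem lp.adjoint_single_one_apply {𝕜 ι : Type*} [RCLike 𝕜] [DecidableEq ι]
    (T : lp (fun _ : ι => 𝕜) 2 →L[𝕜] lp (fun _ : ι => 𝕜) 2) (a i : ι) :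
    adjoint T (lp.single 2 a 1) i = starRingEnd 𝕜 (T (lp.single 2 i 1) a) := by
  calc adjoint T (lp.single 2 a 1) i
      = ⟪lp.single 2 i (1 : 𝕜), adjoint T (lp.single 2 a 1)⟫_𝕜 := by
        simp [lp.inner_single_left]
    _ = starRingEnd 𝕜 ⟪lp.single 2 a (1 : 𝕜), T (lp.single 2 i 1)⟫_𝕜 := by
        rw [adjoint_inner_right, inner_conj_symm]
    _ = starRingEnd 𝕜 (T (lp.single 2 i 1) a) := by
        simp [lp.inner_single_left]

theorem E_apply (j k a b : ℕ) : E j k (a, b) = if j = a ∧ k = b then 1 else 0 := by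
  simp [E, lp.single_apply, Pi.single_apply, eq_comm]

theorem adjoint_apply_E_zero_zero (T : K →L[ℂ] K) (j k : ℕ) :
    adjoint T (E 0 0) (j, k) = starRingEnd ℂ (T (E j k) (0, 0)) :=
  lp.adjoint_single_one_apply T (0, 0) (j, k)

theorem stmt11_general (q : ℝ) (φ : ℝ)
    (z11 z21 z22 : K →L[ℂ] K)
    (hz11 : ∀ j k : ℕ, z11 (E j k)
      = (Complex.exp (φ * Complex.I) * ((q ^ (2 * k) : ℝ) : ℂ)) • E j k
        - (((q⁻¹ * Real.sqrt (1 - q ^ (4 * j)) * Real.sqrt (1 - q ^ (2 * (k + 1)))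
            * Real.sqrt (1 - q ^ (2 * (k + 2)))) : ℝ) : ℂ) • E (j - 1) (k + 2))
    (hz21 : ∀ j k : ℕ, z21 (E j k)
      = (((q ^ (2 * j) * Real.sqrt (1 - q ^ (2 * (k + 1)))) : ℝ) : ℂ) • E j (k + 1))
    (hz22 : ∀ j k : ℕ, z22 (E j k)
      = ((Real.sqrt (1 - q ^ (4 * (j + 1))) : ℝ) : ℂ) • E (j + 1) k) :
    adjoint z11 (E 0 0) = Complex.exp (-(φ * Complex.I)) • E 0 0
    ∧ adjoint z21 (E 0 0) = 0
    ∧ adjoint z22 (E 0 0) = 0 := by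
  refine ⟨?_, ?_, ?_⟩ <;> refine lp.ext (funext fun ⟨j, k⟩ => ?_) <;>
    simp only [adjoint_apply_E_zero_zero, hz11, hz21, hz22, lp.coeFn_sub, lp.coeFn_smul,
      Pi.sub_apply, Pi.smul_apply, lp.coeFn_zero, Pi.zero_apply, E_apply]
  · obtain ⟨rfl, rfl⟩ | hjk := em (j = 0 ∧ k = 0)
    · simp [← Complex.exp_conj]
    · simp [hjk, @eq_comm ℕ 0]
  · simp
  · simp

/-- τ_φ(z₁₁) = e^{iφ} I⊗D² − q⁻¹ S*C₄ ⊗ C₂SC₂S, τ_φ(z₂₁) = D²⊗C₂S, τ_φ(z₂₂) = C₄S⊗I,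
described by their action on the basis e_j ⊗ e_k; the coherent vector is Ω = e₀⊗e₀. -/
theorem stmt11 (q : ℝ) (hq : 0 < q) (hq1 : q < 1) (φ : ℝ)
    (z11 z21 z22 : K →L[ℂ] K)
    (hz11 : ∀ j k : ℕ, z11 (E j k)
      = (Complex.exp (φ * Complex.I) * ((q ^ (2 * k) : ℝ) : ℂ)) • E j k
        - (((q⁻¹ * Real.sqrt (1 - q ^ (4 * j)) * Real.sqrt (1 - q ^ (2 * (k + 1)))
            * Real.sqrt (1 - q ^ (2 * (k + 2)))) : ℝ) : ℂ) • E (j - 1) (k + 2))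
    (hz21 : ∀ j k : ℕ, z21 (E j k)
      = (((q ^ (2 * j) * Real.sqrt (1 - q ^ (2 * (k + 1)))) : ℝ) : ℂ) • E j (k + 1))
    (hz22 : ∀ j k : ℕ, z22 (E j k)
      = ((Real.sqrt (1 - q ^ (4 * (j + 1))) : ℝ) : ℂ) • E (j + 1) k) :
    adjoint z11 (E 0 0) = Complex.exp (-(φ * Complex.I)) • E 0 0
    ∧ adjoint z21 (E 0 0) = 0
    ∧ adjoint z22 (E 0 0) = 0 :=
  stmt11_general q φ z11 z21 z22 hz11 hz21 hz22
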